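/- arXiv:2301.09783 — 8 statements merged into one kernel-verified Lean document; each statement's English description precedes it below -/
import Mathlib

section
/- Let ρ > 3 be an odd prime. Then the multiplicative order of 3 modulo 4ρ equals ρ-1 if and only if either (1) ρ ≡ ±5 (mod 12) and the multiplicative order of 3 modulo ρ is ρ-1, or (2) ρ ≡ -1 (mod 12) and the multiplicative order of 3 modulo ρ is (ρ-1)/2. -/
theorem ord_four_rho_three (ρ : ℕ) (hρ : ρ.Prime) (hρ3 : 3 < ρ) :
    orderOf (3 : ZMod (4 * ρ)) = ρ - 1 ↔
      (((ρ % 12 = 5 ∨ ρ % 12 = 7) ∧ orderOf (3 : ZMod ρ) = ρ - 1) ∨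
       (ρ % 12 = 11 ∧ orderOf (3 : ZMod ρ) = (ρ - 1) / 2)) := by
  haveI : Fact ρ.Prime := ⟨hρ⟩
  haveI : Fact (Nat.Prime 3) := ⟨by norm_num⟩
  have h2 : ρ % 2 = 1 := Nat.odd_iff.mp (hρ.odd_of_ne_two (by omega))
  have h3 : ρ % 3 ≠ 0 := by
    intro h
    have := (Nat.prime_dvd_prime_iff_eq (by norm_num) hρ).mp (Nat.dvd_of_mod_eq_zero h)
    omega
  -- CRT step
  have hco : Nat.Coprime 4 ρ := (hρ.coprime_iff_not_dvd.mpr (fun h => by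
    have := Nat.le_of_dvd (by norm_num) h; omega)).symm
  have e := ZMod.chineseRemainder hco
  have hkey : orderOf (3 : ZMod (4 * ρ)) = Nat.lcm 2 (orderOf (3 : ZMod ρ)) := by
    have h1 : orderOf (3 : ZMod (4 * ρ)) = orderOf (e 3) :=
      (e.toMulEquiv.orderOf_eq (3 : ZMod (4 * ρ))).symm
    have h2' : e (3 : ZMod (4 * ρ)) = ((3 : ZMod 4), (3 : ZMod ρ)) := by
      have := map_ofNat (e : ZMod (4 * ρ) →+* ZMod 4 × ZMod ρ) 3
      rw [show (3 : ZMod (4 * ρ)) = ((3 : ℕ) : ZMod (4 * ρ)) by norm_cast, map_natCast]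
      ext <;> simp
    haveI : Fact (Nat.Prime 2) := ⟨Nat.prime_two⟩
    have h4ord : orderOf (3 : ZMod 4) = 2 := orderOf_eq_prime (by decide) (by decide)
    rw [h1, h2', Prod.orderOf_mk, h4ord]
  set d := orderOf (3 : ZMod ρ) with hdd
  have h3ne : (3 : ZMod ρ) ≠ 0 := by
    have : ((3 : ℕ) : ZMod ρ) ≠ 0 := by
      rw [Ne, ZMod.natCast_eq_zero_iff]
      intro h; have := Nat.le_of_dvd (by norm_num) h; omega
    simpa using this
  have hdvd : d ∣ ρ - 1 := ZMod.orderOf_dvd_card_sub_one h3ne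
  have hdpos : 0 < d := by
    rcases Nat.eq_zero_or_pos d with h | h
    · rw [h] at hdvd; omega
    · exact h
  -- Euler criterion
  have hEuler : IsSquare (3 : ZMod ρ) ↔ d ∣ (ρ - 1) / 2 := by
    rw [ZMod.euler_criterion ρ h3ne, ← orderOf_dvd_iff_pow_eq_one,
      show ρ / 2 = (ρ - 1) / 2 from by omega]
  -- Quadratic reciprocity
  have hsq3 : IsSquare ((ρ : ℕ) : ZMod 3) ↔ ρ % 3 = 1 := by
    rw [← ZMod.natCast_mod ρ 3]
    have h : ρ % 3 = 1 ∨ ρ % 3 = 2 := by omega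
    rcases h with h | h <;> rw [h]
    · simp
    · constructor
      · intro hs
        exact absurd hs (by decide +revert)
      · omega
  have hQR : IsSquare (3 : ZMod ρ) ↔ (ρ % 12 = 1 ∨ ρ % 12 = 11) := by
    have hcast : (3 : ZMod ρ) = ((3 : ℕ) : ZMod ρ) := by norm_cast
    have h4 : ρ % 4 = 1 ∨ ρ % 4 = 3 := by omega
    rcases h4 with h4 | h4
    · rw [hcast, ZMod.exists_sq_eq_prime_iff_of_mod_four_eq_one h4 (by norm_num), hsq3]
      omega
    · rw [hcast, ZMod.exists_sq_eq_prime_iff_of_mod_four_eq_three h4 (by norm_num)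
        (by omega), hsq3]
      omega
  rw [hkey]
  constructor
  · intro h
    rcases Nat.even_or_odd d with he | ho
    · have hld : Nat.lcm 2 d = d :=
        Nat.dvd_antisymm (Nat.lcm_dvd he.two_dvd dvd_rfl) (Nat.dvd_lcm_right 2 d)
      have hd : d = ρ - 1 := by omega
      have hnsq : ¬ IsSquare (3 : ZMod ρ) := by
        rw [hEuler]
        intro hdvd2
        have := Nat.le_of_dvd (by omega) hdvd2
        omega
      rw [hQR] at hnsq
      exact Or.inl ⟨by omega, hd⟩
    · have hld : Nat.lcm 2 d = 2 * d := (Nat.coprime_two_left.mpr ho).lcm_eq_mul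
      have hd : d = (ρ - 1) / 2 := by omega
      have hsq : IsSquare (3 : ZMod ρ) := hEuler.mpr (hd ▸ dvd_rfl)
      rw [hQR] at hsq
      have hodd : d % 2 = 1 := Nat.odd_iff.mp ho
      exact Or.inr ⟨by omega, hd⟩
  · rintro (⟨h12, hd⟩ | ⟨h12, hd⟩)
    · have he : 2 ∣ d := by omega
      have : Nat.lcm 2 d = d :=
        Nat.dvd_antisymm (Nat.lcm_dvd he dvd_rfl) (Nat.dvd_lcm_right 2 d)
      omega
    · have ho : Odd d := Nat.odd_iff.mpr (by omega)
      have : Nat.lcm 2 d = 2 * d := (Nat.coprime_two_left.mpr ho).lcm_eq_mul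
      omega
end

section
/- Let ℓ ≥ 2 be an integer and let n be a positive divisor of 3^ℓ + 1 with 2n > 3^{⌈ℓ/2⌉} + 1. Then the multiplicative order of 3 modulo 2n equals 2ℓ. -/
theorem ord_two_n_eq_two_ell (ℓ n : ℕ) (hℓ : 2 ≤ ℓ) (hn : 0 < n)
    (hdvd : n ∣ 3 ^ ℓ + 1) (hbig : 2 * n > 3 ^ ((ℓ + 1) / 2) + 1) :
    orderOf (3 : ZMod (2 * n)) = 2 * ℓ := by
  set c := (ℓ + 1) / 2 with hc
  have hc1 : 1 ≤ c := by omega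
  have h3c : 3 ^ 1 ≤ 3 ^ c := Nat.pow_le_pow_right (by norm_num) hc1
  have hm4 : 4 < 2 * n := by simpa using lt_of_le_of_lt (by omega : 3 ^ 1 + 1 ≤ 3 ^ c + 1) hbig
  haveI : NeZero (2 * n) := ⟨by omega⟩
  haveI : NeZero n := ⟨by omega⟩
  have hpl : (1:ℕ) ≤ 3 ^ ℓ := Nat.one_le_pow _ _ (by norm_num)
  have hpl2 : (1:ℕ) ≤ 3 ^ (2 * ℓ) := Nat.one_le_pow _ _ (by norm_num)
  have h2d : (2:ℕ) ∣ 3 ^ ℓ - 1 := by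
    have := Nat.sub_dvd_pow_sub_pow 3 1 ℓ
    simpa using this
  have key : (3 ^ ℓ - 1) * (3 ^ ℓ + 1) = 3 ^ (2 * ℓ) - 1 := by
    have h2 : (3:ℕ) ^ (2 * ℓ) = 3 ^ ℓ * 3 ^ ℓ := by rw [two_mul, pow_add]
    zify [hpl, hpl2]
    push_cast [h2]
    ring
  have hdvd2 : 2 * n ∣ 3 ^ (2 * ℓ) - 1 := key ▸ mul_dvd_mul h2d hdvd
  have hpow : (3 : ZMod (2 * n)) ^ (2 * ℓ) = 1 := by
    have h0 : ((3 ^ (2 * ℓ) - 1 : ℕ) : ZMod (2 * n)) = 0 :=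
      (ZMod.natCast_eq_zero_iff _ _).mpr hdvd2
    rw [Nat.cast_sub hpl2] at h0
    push_cast at h0
    linear_combination h0
  set d := orderOf (3 : ZMod (2 * n)) with hdd
  have hd2ℓ : d ∣ 2 * ℓ := orderOf_dvd_of_pow_eq_one hpow
  have hdpos : 0 < d := by
    rcases Nat.eq_zero_or_pos d with h | h
    · rw [h] at hd2ℓ; omega
    · exact h
  have hpd : (3 : ZMod (2 * n)) ^ d = 1 := pow_orderOf_eq_one _
  have hpld : (1:ℕ) ≤ 3 ^ d := Nat.one_le_pow _ _ (by norm_num)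
  have hmd : 2 * n ∣ 3 ^ d - 1 := by
    rw [← ZMod.natCast_eq_zero_iff, Nat.cast_sub hpld]
    push_cast
    linear_combination hpd
  have hnd : n ∣ 3 ^ d - 1 := dvd_trans (dvd_mul_left n 2) hmd
  by_cases hdl : d ∣ ℓ
  · exfalso
    obtain ⟨q, hq⟩ := hdl
    have hdl1 : 3 ^ d - 1 ∣ 3 ^ ℓ - 1 := by
      have := Nat.sub_dvd_pow_sub_pow (3 ^ d) 1 q
      simpa [← pow_mul, ← hq] using this
    have h1 : n ∣ 3 ^ ℓ - 1 := hnd.trans hdl1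
    have h2 : n ∣ 2 := by
      have := Nat.dvd_sub hdvd h1
      have he : 3 ^ ℓ + 1 - (3 ^ ℓ - 1) = 2 := by omega
      rwa [he] at this
    have := Nat.le_of_dvd (by norm_num) h2
    omega
  · obtain ⟨k, hk⟩ : 2 ∣ d := by
      rcases Nat.even_or_odd d with he | ho
      · exact he.two_dvd
      · exact absurd (ho.coprime_two_right.dvd_of_dvd_mul_right
          (by rwa [mul_comm] at hd2ℓ)) hdl
    have hkl : k ∣ ℓ := by
      have h : 2 * k ∣ 2 * ℓ := hk ▸ hd2ℓ
      exact (mul_dvd_mul_iff_left (by norm_num : (2:ℕ) ≠ 0)).mp h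
    obtain ⟨q, hq⟩ := hkl
    have hkpos : 0 < k := by omega
    have hqodd : Odd q := by
      rcases Nat.even_or_odd q with he | ho
      · obtain ⟨r, hr⟩ := he
        exact absurd ⟨r, by rw [hq, hk, hr]; ring⟩ hdl
      · exact ho
    rcases eq_or_ne q 1 with hq1 | hq1
    · rw [hk]; rw [hq, hq1, mul_one] at *
    · exfalso
      have hq3 : 3 ≤ q := by
        obtain ⟨t, ht⟩ := hqodd
        have h0 : q ≠ 0 := by rintro rfl; omega
        omega
      have hxℓ : (3 : ZMod n) ^ ℓ = -1 := by
        have h0 : ((3 ^ ℓ + 1 : ℕ) : ZMod n) = 0 :=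
          (ZMod.natCast_eq_zero_iff _ _).mpr hdvd
        push_cast at h0
        linear_combination h0
      have hx2k : (3 : ZMod n) ^ (2 * k) = 1 := by
        have h0 : ((3 ^ d - 1 : ℕ) : ZMod n) = 0 :=
          (ZMod.natCast_eq_zero_iff _ _).mpr hnd
        rw [Nat.cast_sub hpld] at h0
        push_cast at h0
        rw [← hk]
        linear_combination h0
      have hxk : (3 : ZMod n) ^ k = -1 := by
        obtain ⟨t, ht⟩ := hqodd
        calc (3:ZMod n)^k = ((3:ZMod n)^(2*k))^t * (3:ZMod n)^k := by rw [hx2k]; ring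
          _ = (3:ZMod n)^ℓ := by
              rw [← pow_mul, ← pow_add]
              congr 1
              rw [hq, ht]; ring
          _ = -1 := hxℓ
      have hnk : n ∣ 3 ^ k + 1 := by
        rw [← ZMod.natCast_eq_zero_iff]
        push_cast
        rw [hxk]; ring
      have hle : n ≤ 3 ^ k + 1 := Nat.le_of_dvd (by positivity) hnk
      have hℓ3k : 3 * k ≤ ℓ := by
        have := Nat.mul_le_mul_left k hq3
        omega
      have hkc : k + 1 ≤ c := by omega
      have h3kc : 3 ^ (k + 1) ≤ 3 ^ c := Nat.pow_le_pow_right (by norm_num) hkc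
      have h3k3 : 3 ≤ 3 ^ k := by
        calc (3:ℕ) = 3 ^ 1 := rfl
          _ ≤ 3 ^ k := Nat.pow_le_pow_right (by norm_num) hkpos
      have hsplit : 3 ^ (k + 1) = 3 * 3 ^ k := by ring
      omega
end

section
/- Let m ≥ 3 be an integer and let n be a positive divisor of (3^m - 1)/2 with n > (3^{⌊m/2⌋} + 1)/2. Then the multiplicative order of 3 modulo 2n equals m. -/
theorem ord_two_n_eq_m (m n : ℕ) (hm : 3 ≤ m) (hn : 0 < n)
    (hdvd : n ∣ (3 ^ m - 1) / 2) (hbig : n > (3 ^ (m / 2) + 1) / 2) :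
    orderOf (3 : ZMod (2 * n)) = m := by
  have hNZ : NeZero (2 * n) := ⟨by omega⟩
  have hodd : Odd (3 ^ m) := Odd.pow ⟨1, rfl⟩
  have h2 : 2 ∣ 3 ^ m - 1 := by
    obtain ⟨k, hk⟩ := hodd
    omega
  have h2n : 2 * n ∣ 3 ^ m - 1 := by
    have hmul : 2 * ((3 ^ m - 1) / 2) = 3 ^ m - 1 := Nat.mul_div_cancel' h2
    obtain ⟨c, hc⟩ := hdvd
    exact ⟨c, by rw [← hmul, hc]; ring⟩
  -- key lemma: 2n ∣ 3^k - 1 iff (3:ZMod (2n))^k = 1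
  have key : ∀ k : ℕ, (3 : ZMod (2 * n)) ^ k = 1 ↔ 2 * n ∣ 3 ^ k - 1 := by
    intro k
    have h1 : (1 : ℕ) ≤ 3 ^ k := Nat.one_le_pow _ _ (by norm_num)
    rw [show (3 : ZMod (2*n)) = ((3:ℕ) : ZMod (2*n)) by push_cast; ring, ← Nat.cast_pow]
    constructor
    · intro h
      have : ((3 ^ k - 1 : ℕ) : ZMod (2*n)) = 0 := by
        rw [Nat.cast_sub h1, h]; simp
      exact (ZMod.natCast_eq_zero_iff _ _).mp this
    · intro h
      have : ((3 ^ k - 1 : ℕ) : ZMod (2*n)) = 0 :=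
        (ZMod.natCast_eq_zero_iff _ _).mpr h
      rw [Nat.cast_sub h1] at this
      have := sub_eq_zero.mp this
      simpa using this
  have hpow : (3 : ZMod (2 * n)) ^ m = 1 := (key m).mpr h2n
  have hfin : IsOfFinOrder (3 : ZMod (2 * n)) :=
    isOfFinOrder_iff_pow_eq_one.mpr ⟨m, by omega, hpow⟩
  set d := orderOf (3 : ZMod (2 * n)) with hd
  have hdvdm : d ∣ m := orderOf_dvd_of_pow_eq_one hpow
  have hdpos : 0 < d := hfin.orderOf_pos
  by_contra hne
  have hlt : d < m := lt_of_le_of_ne (Nat.le_of_dvd (by omega) hdvdm) hne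
  have hhalf : d ≤ m / 2 := by
    obtain ⟨c, hc⟩ := hdvdm
    have hc2 : 2 ≤ c := by rcases c with _ | _ | c <;> omega
    have : 2 * d ≤ m := by calc 2 * d = d * 2 := by ring
                                 _ ≤ d * c := Nat.mul_le_mul_left d hc2
                                 _ = m := hc.symm
    omega
  have hdd : 2 * n ∣ 3 ^ d - 1 := (key d).mp (pow_orderOf_eq_one _)
  have h3d : 1 < 3 ^ d := Nat.one_lt_pow (by omega) (by norm_num)
  have hle : 2 * n ≤ 3 ^ d - 1 := Nat.le_of_dvd (by omega) hdd
  have hmono : 3 ^ d ≤ 3 ^ (m / 2) := Nat.pow_le_pow_right (by norm_num) hhalf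
  have hoddh : Odd (3 ^ (m / 2)) := Odd.pow ⟨1, rfl⟩
  obtain ⟨k, hk⟩ := hoddh
  omega
end

section
/- Let m ≥ 3 be an integer and let n be a positive divisor of (3^m - 1)/2 with n > (3^{⌊m/2⌋} + 1)/2. Then there is no integer ℓ with 0 ≤ ℓ ≤ m-1 such that 3^ℓ ≡ -1 (mod 2n). -/
theorem no_power_eq_neg_one (m n : ℕ) (hm : 3 ≤ m) (hn : 0 < n)
    (hdvd : n ∣ (3 ^ m - 1) / 2) (hbig : n > (3 ^ (m / 2) + 1) / 2) :
    ∀ ℓ : ℕ, ℓ ≤ m - 1 → (3 : ZMod (2 * n)) ^ ℓ ≠ -1 := by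
  intro ℓ hℓ h
  -- 3^(m/2) is odd and at least 3
  have hxodd : (3:ℕ) ^ (m / 2) % 2 = 1 := by
    rw [Nat.pow_mod]; simp
  have hxge : (3:ℕ) ≤ 3 ^ (m / 2) := by
    calc (3:ℕ) = 3 ^ 1 := by ring
    _ ≤ 3 ^ (m / 2) := Nat.pow_le_pow_right (by norm_num) (by omega)
  have h2n : 3 ^ (m / 2) + 1 < 2 * n := by omega
  -- 2n divides 3^m - 1
  have hodd : (3:ℕ) ^ m % 2 = 1 := by rw [Nat.pow_mod]; simp
  have h2dvd : 2 * n ∣ 3 ^ m - 1 := by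
    obtain ⟨k, hk⟩ := hdvd
    refine ⟨k, ?_⟩
    have h1 : 1 ≤ (3:ℕ)^m := Nat.one_le_pow _ _ (by norm_num)
    rw [mul_assoc]
    omega
  -- 3^m = 1 in ZMod (2n)
  have h3m : (3 : ZMod (2 * n)) ^ m = 1 := by
    have hmod := (Nat.modEq_iff_dvd' (Nat.one_le_pow _ _ (by norm_num))).mpr h2dvd
    have := (ZMod.natCast_eq_natCast_iff 1 (3 ^ m) (2 * n)).mpr hmod
    push_cast at this
    exact this.symm
  -- order argument
  set d := Nat.gcd m (2 * ℓ) with hd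
  have hdm : d ∣ m := Nat.gcd_dvd_left _ _
  have h3d : (3 : ZMod (2 * n)) ^ d = 1 := by
    have h1 : orderOf (3 : ZMod (2 * n)) ∣ m := orderOf_dvd_of_pow_eq_one h3m
    have h2 : orderOf (3 : ZMod (2 * n)) ∣ 2 * ℓ := by
      apply orderOf_dvd_of_pow_eq_one
      rw [pow_mul', h]
      norm_num
    exact orderOf_dvd_iff_pow_eq_one.mp (Nat.dvd_gcd h1 h2)
  rcases eq_or_ne d m with heq | hne
  · -- m ∣ 2ℓ, so ℓ = 0 or 2ℓ = m
    have hm2ℓ : m ∣ 2 * ℓ := heq ▸ Nat.gcd_dvd_right m (2 * ℓ)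
    rcases Nat.eq_zero_or_pos ℓ with h0 | hpos
    · subst h0
      simp only [pow_zero] at h
      have h2 : ((2:ℕ) : ZMod (2 * n)) = 0 := by
        push_cast
        linear_combination h
      have := (ZMod.natCast_eq_zero_iff 2 (2 * n)).mp h2
      have := Nat.le_of_dvd (by norm_num) this
      omega
    · have h2ℓ : 2 * ℓ = m := by
        obtain ⟨k, hk⟩ := hm2ℓ
        rcases Nat.lt_or_ge k 2 with hk' | hk'
        · interval_cases k <;> omega
        · have : m * 2 ≤ m * k := Nat.mul_le_mul_left m hk'
          omega
      have hcast : ((3 ^ ℓ + 1 : ℕ) : ZMod (2 * n)) = 0 := by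
        push_cast
        rw [h]
        ring
      have hdvd2 := (ZMod.natCast_eq_zero_iff _ (2 * n)).mp hcast
      have hle := Nat.le_of_dvd (by positivity) hdvd2
      have hℓm : ℓ = m / 2 := by omega
      subst hℓm
      omega
  · -- d < m, so d ≤ m/2 and 2n ∣ 3^d - 1 gives contradiction
    have hdpos : 0 < d := Nat.gcd_pos_of_pos_left _ (by omega)
    have hdle : d ≤ m / 2 := by
      obtain ⟨k, hk⟩ := hdm
      rcases Nat.lt_or_ge k 2 with hk' | hk'
      · interval_cases k <;> omega
      · have : d * 2 ≤ d * k := Nat.mul_le_mul_left d hk'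
        omega
    have hdvd3 : 2 * n ∣ 3 ^ d - 1 := by
      have hcast : ((3 ^ d : ℕ) : ZMod (2 * n)) = ((1:ℕ) : ZMod (2 * n)) := by
        push_cast; exact h3d
      have hmod := (ZMod.natCast_eq_natCast_iff _ _ _).mp hcast
      exact (Nat.modEq_iff_dvd' (Nat.one_le_pow _ _ (by norm_num))).mp hmod.symm
    have hpos3 : 0 < 3 ^ d - 1 := by
      have : (3:ℕ) ≤ 3 ^ d := by
        calc (3:ℕ) = 3 ^ 1 := by ring
        _ ≤ 3 ^ d := Nat.pow_le_pow_right (by norm_num) hdpos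
      omega
    have hle := Nat.le_of_dvd hpos3 hdvd3
    have : (3:ℕ) ^ d ≤ 3 ^ (m / 2) := Nat.pow_le_pow_right (by norm_num) hdle
    omega
end

section
/- Let m ≥ 2 be even. Then the number of tuples in {0,1,2}^m with coordinate sum ≡ 0 (mod 4) equals (3^m + 1 + 2(-1)^{m/2})/4, and the number with coordinate sum ≡ 2 (mod 4) equals (3^m + 1 - 2(-1)^{m/2})/4. -/
def Ncnt (m : ℕ) (r : ZMod 4) : ℕ :=
  ((Finset.univ : Finset (Fin m → Fin 3)).filter
    (fun f => ((∑ j, (f j : ℕ) : ℕ) : ZMod 4) = r)).card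

lemma Nrec (m : ℕ) (r : ZMod 4) :
    Ncnt (m + 1) r = Ncnt m r + Ncnt m (r - 1) + Ncnt m (r - 2) := by
  classical
  have key : Ncnt (m+1) r = ∑ a : Fin 3, Ncnt m (r - (a : ℕ)) := by
    unfold Ncnt
    rw [Finset.card_filter]
    rw [← Fintype.sum_equiv (Fin.consEquiv (fun _ : Fin (m+1) => Fin 3))
      (fun p : Fin 3 × (Fin m → Fin 3) =>
        if ((∑ j, ((Fin.cons p.1 p.2 : Fin (m+1) → Fin 3) j : ℕ) : ℕ) : ZMod 4) = r then 1 else 0)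
      _ (fun p => rfl)]
    rw [Fintype.sum_prod_type]
    refine Finset.sum_congr rfl (fun a _ => ?_)
    rw [Finset.card_filter]
    refine Finset.sum_congr rfl (fun g _ => ?_)
    have hs : (∑ j : Fin (m+1), ((Fin.cons a g : Fin (m+1) → Fin 3) j : ℕ))
        = (a : ℕ) + ∑ j, (g j : ℕ) := by
      simp [Fin.sum_univ_succ]
    rw [hs]
    congr 1
    apply propext
    push_cast
    rw [eq_sub_iff_add_eq, add_comm]
  rw [key, Fin.sum_univ_three]
  norm_num

lemma Ntot (m : ℕ) : Ncnt m 0 + Ncnt m 1 + Ncnt m 2 + Ncnt m 3 = 3 ^ m := by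
  classical
  have h := Finset.card_eq_sum_card_fiberwise
    (f := fun f : Fin m → Fin 3 => ((∑ j, (f j : ℕ) : ℕ) : ZMod 4))
    (s := Finset.univ) (t := Finset.univ) (fun x _ => Finset.mem_univ _)
  have hcard : (Finset.univ : Finset (Fin m → Fin 3)).card = 3 ^ m := by
    simp [Finset.card_univ]
  rw [hcard] at h
  have h2 : (3:ℕ) ^ m = ∑ r : ZMod 4, Ncnt m r := by rw [h]; rfl
  rw [show (Finset.univ : Finset (ZMod 4)) = {0, 1, 2, 3} by decide] at h2
  rw [Finset.sum_insert (by decide), Finset.sum_insert (by decide),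
    Finset.sum_insert (by decide), Finset.sum_singleton] at h2
  rw [h2]; ring

lemma Ntwo (m : ℕ) :
    Ncnt (m + 2) 0 = 2 * 3 ^ m + Ncnt m 2 ∧ Ncnt (m + 2) 2 = 2 * 3 ^ m + Ncnt m 0 := by
  have e1 : (0 : ZMod 4) - 1 = 3 := by decide
  have e2 : (0 : ZMod 4) - 2 = 2 := by decide
  have e3 : (3 : ZMod 4) - 1 = 2 := by decide
  have e4 : (3 : ZMod 4) - 2 = 1 := by decide
  have e5 : (2 : ZMod 4) - 1 = 1 := by decide
  have e6 : (2 : ZMod 4) - 2 = 0 := by decide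
  have e7 : (1 : ZMod 4) - 1 = 0 := by decide
  have e8 : (1 : ZMod 4) - 2 = 3 := by decide
  have h0 := Nrec (m+1) 0; rw [e1, e2] at h0
  have h2 := Nrec (m+1) 2; rw [e5, e6] at h2
  have g0 := Nrec m 0; rw [e1, e2] at g0
  have g1 := Nrec m 1; rw [e7, e8] at g1
  have g2 := Nrec m 2; rw [e5, e6] at g2
  have g3 := Nrec m 3; rw [e3, e4] at g3
  have t := Ntot m
  constructor
  · show Ncnt (m + 1 + 1) 0 = 2 * 3 ^ m + Ncnt m 2
    omega
  · show Ncnt (m + 1 + 1) 2 = 2 * 3 ^ m + Ncnt m 0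
    omega

lemma Nbase : Ncnt 2 0 = 2 ∧ Ncnt 2 2 = 3 := by decide

lemma Nclosed (k : ℕ) :
    (4 * (Ncnt (2 * k + 2) 0 : ℤ) = 3 ^ (2 * k + 2) + 1 + 2 * (-1 : ℤ) ^ (k + 1)) ∧
    (4 * (Ncnt (2 * k + 2) 2 : ℤ) = 3 ^ (2 * k + 2) + 1 - 2 * (-1 : ℤ) ^ (k + 1)) := by
  induction k with
  | zero => rw [Nbase.1, Nbase.2]; norm_num
  | succ n ih =>
    obtain ⟨ih0, ih2⟩ := ih
    have h := Ntwo (2 * n + 2)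
    have hm : 2 * (n + 1) + 2 = (2 * n + 2) + 2 := by ring
    rw [hm, h.1, h.2]
    push_cast
    have h9 : (3:ℤ) ^ (2 * n + 2 + 2) = 9 * 3 ^ (2 * n + 2) := by ring
    have hs : (-1:ℤ) ^ (n + 1 + 1) = -(-1:ℤ) ^ (n + 1) := by ring
    constructor
    · rw [hs, h9]; linarith [ih2]
    · rw [hs, h9]; linarith [ih0]

lemma cast_iff0 (n : ℕ) : ((n : ZMod 4) = (0 : ZMod 4)) ↔ n % 4 = 0 := by
  rw [ZMod.natCast_eq_zero_iff]; omega

lemma cast_iff2 (n : ℕ) : ((n : ZMod 4) = (2 : ZMod 4)) ↔ n % 4 = 2 := by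
  rw [show (2 : ZMod 4) = ((2 : ℕ) : ZMod 4) by norm_num, ZMod.natCast_eq_natCast_iff]
  unfold Nat.ModEq; omega

theorem count_sum_mod_four_even_m_even_residues (m : ℕ) (hm : 2 ≤ m) (hme : Even m) :
    (4 * (((Finset.univ : Finset (Fin m → Fin 3)).filter
        (fun f => (∑ j, (f j : ℕ)) % 4 = 0)).card : ℤ)
      = 3 ^ m + 1 + 2 * (-1 : ℤ) ^ (m / 2)) ∧
    (4 * (((Finset.univ : Finset (Fin m → Fin 3)).filter
        (fun f => (∑ j, (f j : ℕ)) % 4 = 2)).card : ℤ)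
      = 3 ^ m + 1 - 2 * (-1 : ℤ) ^ (m / 2)) := by
  classical
  obtain ⟨t, ht⟩ := hme
  obtain ⟨k, hk⟩ : ∃ k, m = 2 * k + 2 := ⟨t - 1, by omega⟩
  have hd : m / 2 = k + 1 := by omega
  have hc0 : ((Finset.univ : Finset (Fin m → Fin 3)).filter
      (fun f => (∑ j, (f j : ℕ)) % 4 = 0)).card = Ncnt m 0 := by
    unfold Ncnt
    congr 1
    apply Finset.filter_congr
    intro f _
    exact (cast_iff0 _).symm
  have hc2 : ((Finset.univ : Finset (Fin m → Fin 3)).filter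
      (fun f => (∑ j, (f j : ℕ)) % 4 = 2)).card = Ncnt m 2 := by
    unfold Ncnt
    congr 1
    apply Finset.filter_congr
    intro f _
    exact (cast_iff2 _).symm
  rw [hc0, hc2, hd, hk]
  exact Nclosed k
end

section
/- Let m ≥ 5 with m ≡ 1 (mod 4), N = 3^m - 1, and v = (3^m - 1)/2 + 3^{(m-1)/2} - 1. Then gcd(v, N) = 1. -/
theorem gcd_v_N_one (m : ℕ) (hm : 5 ≤ m) (hm4 : m % 4 = 1) :
    Nat.gcd ((3 ^ m - 1) / 2 + 3 ^ ((m - 1) / 2) - 1) (3 ^ m - 1) = 1 := by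
  obtain ⟨t, rfl⟩ : ∃ t, m = 2 * t + 1 := ⟨m / 2, by omega⟩
  set s : ℕ := 3 ^ t with hs
  have hpow : 3 ^ (2 * t + 1) = 3 * s ^ 2 := by
    rw [hs, ← pow_mul]; ring
  have hidx : (2 * t + 1 - 1) / 2 = t := by omega
  have hs1 : 1 ≤ s := Nat.one_le_pow _ _ (by norm_num)
  have hsodd : s % 2 = 1 := by
    rw [hs, Nat.pow_mod]; simp
  have hs4 : s ^ 2 % 4 = 1 := by
    obtain ⟨k, hk⟩ : ∃ k, s = 2 * k + 1 := ⟨s / 2, by omega⟩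
    rw [hk]
    have : (2 * k + 1) ^ 2 = 4 * (k * k + k) + 1 := by ring
    omega
  rw [hidx, hpow]
  set v : ℕ := (3 * s ^ 2 - 1) / 2 + s - 1 with hv
  set N : ℕ := 3 * s ^ 2 - 1 with hN
  set d : ℕ := Nat.gcd v N with hd
  have hdv : d ∣ v := Nat.gcd_dvd_left _ _
  have hdN : d ∣ N := Nat.gcd_dvd_right _ _
  have h2v : 2 * v = N + (2 * s - 2) := by omega
  have hvodd : v % 2 = 1 := by omega
  have hdodd : ¬ 2 ∣ d := by
    intro h
    have h2 : 2 ∣ v := h.trans hdv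
    omega
  have hd2s : d ∣ 2 * (s - 1) := by
    have h1 : d ∣ 2 * v := hdv.mul_left 2
    have h2 : 2 * (s - 1) = 2 * v - N := by omega
    rw [h2]
    exact Nat.dvd_sub h1 hdN
  have hco : Nat.Coprime d 2 := by
    rcases Nat.coprime_or_dvd_of_prime Nat.prime_two d with h | h
    · exact h.symm
    · exact absurd h hdodd
  have hds1 : d ∣ s - 1 := (Nat.Coprime.dvd_of_dvd_mul_left hco hd2s)
  -- move to ℤ
  have hds1' : (d : ℤ) ∣ (s : ℤ) - 1 := by
    have := Int.natCast_dvd_natCast.mpr hds1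
    rwa [Int.ofNat_sub hs1] at this
  have hdN' : (d : ℤ) ∣ 3 * (s : ℤ) ^ 2 - 1 := by
    have := Int.natCast_dvd_natCast.mpr hdN
    rw [hN] at this
    have h1 : 1 ≤ 3 * s ^ 2 := by nlinarith
    rwa [Int.ofNat_sub h1, Int.natCast_mul, Int.natCast_pow] at this
  have hd2 : (d : ℤ) ∣ 2 := by
    have h3 : (d : ℤ) ∣ 3 * ((s : ℤ) - 1) * ((s : ℤ) + 1) := by
      exact Dvd.dvd.mul_right (hds1'.mul_left 3) _
    have heq : (2 : ℤ) = (3 * (s : ℤ) ^ 2 - 1) - 3 * ((s : ℤ) - 1) * ((s : ℤ) + 1) := by ring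
    rw [heq]
    exact dvd_sub hdN' h3
  have hd2n : d ∣ 2 := Int.ofNat_dvd.mp (by exact_mod_cast hd2)
  rcases (Nat.dvd_prime Nat.prime_two).mp hd2n with h | h
  · exact h
  · exact absurd (h ▸ dvd_refl d) hdodd
end

section
/- Let m ≥ 5 with m ≡ 1 (mod 4), N = 3^m - 1, and v = (3^m - 1)/2 + 3^{(m-1)/2} - 1. Then for every integer i with 0 ≤ i ≤ (3^{(m-1)/2} - 1)/4 + 2, the base-3 digit sum of (v(1+2i) mod N) is congruent to 1 modulo 4. -/
private lemma sum3 (x : ℕ) :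
    (Nat.digits 3 x).sum = x % 3 + (Nat.digits 3 (x / 3)).sum := by
  rcases Nat.eq_zero_or_pos x with h | h
  · subst h; simp
  · rw [Nat.digits_def' (by norm_num : 1 < 3) h]; simp

private lemma split3 (t : ℕ) : ∀ a b : ℕ, a < 3 ^ t →
    (Nat.digits 3 (a + 3 ^ t * b)).sum = (Nat.digits 3 a).sum + (Nat.digits 3 b).sum := by
  induction t with
  | zero =>
    intro a b ha
    rw [pow_zero] at ha ⊢
    have ha0 : a = 0 := by omega
    subst ha0; simp
  | succ t ih =>
    intro a b ha
    have h1 : a + 3 ^ (t + 1) * b = a + 3 * (3 ^ t * b) := by ring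
    rw [sum3 (a + 3 ^ (t + 1) * b), sum3 a, h1, Nat.add_mul_mod_self_left,
      Nat.add_mul_div_left _ _ (by norm_num : 0 < 3)]
    have ha' : a / 3 < 3 ^ t := by
      rw [pow_succ] at ha
      exact (Nat.div_lt_iff_lt_mul (by norm_num)).mpr ha
    rw [ih (a / 3) b ha']
    omega

private lemma comp3 (t : ℕ) : ∀ x y : ℕ, x + y + 1 = 3 ^ t →
    (Nat.digits 3 x).sum + (Nat.digits 3 y).sum = 2 * t := by
  induction t with
  | zero =>
    intro x y h
    rw [pow_zero] at h
    have hx : x = 0 := by omega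
    have hy : y = 0 := by omega
    subst hx; subst hy; simp
  | succ t ih =>
    intro x y h
    rw [sum3 x, sum3 y]
    have h3 : (3 : ℕ) ^ (t + 1) = 3 * 3 ^ t := by ring
    rw [h3] at h
    have key : x % 3 + y % 3 = 2 ∧ x / 3 + y / 3 + 1 = 3 ^ t := by omega
    have := ih (x / 3) (y / 3) key.2
    omega

theorem digit_sum_v_mult_mod_one (m : ℕ) (hm : 5 ≤ m) (hm4 : m % 4 = 1) :
    ∀ i : ℕ, i ≤ (3 ^ ((m - 1) / 2) - 1) / 4 + 2 →
      (Nat.digits 3 ((((3 ^ m - 1) / 2 + 3 ^ ((m - 1) / 2) - 1) * (1 + 2 * i))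
        % (3 ^ m - 1))).sum % 4 = 1 := by
  intro i hi
  set t := (m - 1) / 2 with ht
  have hm2 : m = 2 * t + 1 := by omega
  have ht2 : 2 ≤ t := by omega
  have hte : t % 2 = 0 := by omega
  obtain ⟨L, hL⟩ : ∃ L, 3 ^ t = 2 * L + 1 := by
    have hodd : 3 ^ t % 2 = 1 := by rw [Nat.pow_mod]; norm_num
    exact ⟨3 ^ t / 2, by omega⟩
  have hLe : L % 2 = 0 := by
    have h4 : 3 ^ t % 4 = 1 := by
      obtain ⟨s, hs⟩ : ∃ s, t = 2 * s := ⟨t / 2, by omega⟩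
      rw [hs, pow_mul, Nat.pow_mod]; norm_num
    rw [hL] at h4; omega
  have hL4 : 4 ≤ L := by
    have h9 : (3 : ℕ) ^ 2 ≤ 3 ^ t := Nat.pow_le_pow_right (by norm_num) ht2
    rw [hL] at h9; norm_num at h9; omega
  have h3m : 3 ^ m = (2 * L + 1) * (2 * L + 1) * 3 := by
    rw [hm2, ← hL]; ring
  set K := L * L with hK
  have hKL : 4 * L ≤ K := by rw [hK]; exact mul_le_mul_left hL4 L
  have hsq : (2 * L + 1) * (2 * L + 1) * 3 = 12 * K + 12 * L + 3 := by rw [hK]; ring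
  rw [hL] at hi
  have hk5 : 1 + 2 * i ≤ L + 5 := by omega
  rw [h3m, hsq, hL]
  have e2 : 12 * K + 12 * L + 3 - 1 = 12 * K + 12 * L + 2 := by omega
  rw [e2]
  have e1 : (12 * K + 12 * L + 2) / 2 + (2 * L + 1) - 1 = 6 * K + 8 * L + 1 := by omega
  rw [e1]
  have hmul : 2 * L * (1 + 2 * i) ≤ 2 * L * (L + 5) :=
    Nat.mul_le_mul (le_refl (2 * L)) hk5
  have hmul2 : 2 * L * (L + 5) = 2 * K + 10 * L := by rw [hK]; ring
  have hlt : 6 * K + 6 * L + 1 + 2 * L * (1 + 2 * i) < 12 * K + 12 * L + 2 := by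
    rw [hmul2] at hmul; linarith
  have hsplit : (6 * K + 8 * L + 1) * (1 + 2 * i)
      = 6 * K + 6 * L + 1 + 2 * L * (1 + 2 * i) + i * (12 * K + 12 * L + 2) := by
    rw [hK]; ring
  rw [hsplit, Nat.add_mul_mod_self_right, Nat.mod_eq_of_lt hlt]
  have s0 : (Nat.digits 3 0).sum = 0 := by simp
  have s1 : (Nat.digits 3 1).sum = 1 := by rw [sum3]; simp
  have s2 : (Nat.digits 3 2).sum = 2 := by rw [sum3]; simp
  have s3' : (Nat.digits 3 3).sum = 1 := by rw [sum3]; norm_num [s1]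
  have s4 : (Nat.digits 3 4).sum = 2 := by rw [sum3]; norm_num [s1]
  have hcases : 1 + 2 * i ≤ L ∨ 1 + 2 * i = L + 1 ∨ 1 + 2 * i = L + 3 ∨ 1 + 2 * i = L + 5 := by
    omega
  rcases hcases with hkL | hk1 | hk3 | hk5'
  · -- k ≤ L
    have e3 : 6 * K + 6 * L + 1 + 2 * L * (1 + 2 * i)
        = (L - (1 + 2 * i)) + 3 ^ t * (3 ^ t + (L + (1 + 2 * i))) := by
      rw [hL, hK]; zify [hkL]; ring
    rw [e3, split3 t _ _ (by rw [hL]; omega)]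
    have e4 : 3 ^ t + (L + (1 + 2 * i)) = (L + (1 + 2 * i)) + 3 ^ t * 1 := by ring
    rw [e4, split3 t _ 1 (by rw [hL]; omega)]
    have c1 := comp3 t (L - (1 + 2 * i)) (L + (1 + 2 * i)) (by rw [hL]; omega)
    omega
  · -- k = L + 1
    rw [hk1]
    have e3 : 6 * K + 6 * L + 1 + 2 * L * (L + 1)
        = (2 * L) + 3 ^ t * ((2 * L) + 3 ^ t * 1) := by
      rw [hL, hK]; ring
    rw [e3, split3 t _ _ (by rw [hL]; omega), split3 t (2 * L) 1 (by rw [hL]; omega)]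
    have c1 := comp3 t (2 * L) 0 (by rw [hL])
    omega
  · -- k = L + 3
    rw [hk3]
    have e3 : 6 * K + 6 * L + 1 + 2 * L * (L + 3)
        = (2 * L - 2) + 3 ^ t * (1 + 3 ^ t * 2) := by
      rw [hL, hK]; zify [show (2 : ℕ) ≤ 2 * L by omega]; ring
    rw [e3, split3 t _ _ (by rw [hL]; omega), split3 t 1 2 (by rw [hL]; omega)]
    have c1 := comp3 t (2 * L - 2) 2 (by rw [hL]; omega)
    omega
  · -- k = L + 5
    rw [hk5']
    have e3 : 6 * K + 6 * L + 1 + 2 * L * (L + 5)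
        = (2 * L - 4) + 3 ^ t * (3 + 3 ^ t * 2) := by
      rw [hL, hK]; zify [show (4 : ℕ) ≤ 2 * L by omega]; ring
    rw [e3, split3 t _ _ (by rw [hL]; omega), split3 t 3 2 (by rw [hL]; omega)]
    have c1 := comp3 t (2 * L - 4) 4 (by rw [hL]; omega)
    omega
end

section
/- Let m ≥ 5 with m ≡ 1 (mod 4), N = 3^m - 1, and v = (3^m - 1)/2 - 3^{(m-1)/2} - 1. Then gcd(v, N) = 1, and for every integer i with 0 ≤ i ≤ (3^{(m-1)/2} - 1)/4, the base-3 digit sum of (v(1+2i) mod N) is congruent to 3 modulo 4. -/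
lemma sum_digits_split {k a c : ℕ} (ha : a < 3 ^ k) (hc : 0 < c) :
    (Nat.digits 3 (a + 3 ^ k * c)).sum = (Nat.digits 3 a).sum + (Nat.digits 3 c).sum := by
  have hlen : (Nat.digits 3 a).length ≤ k := by
    by_contra hcon
    push_neg at hcon
    rcases Nat.eq_zero_or_pos a with rfl | hapos
    · simp at hcon
    · have h1 : (3:ℕ) ^ (Nat.digits 3 a).length ≤ 3 * a :=
        Nat.base_pow_length_digits_le 3 a (by norm_num) (by omega)
      have h2 : (3:ℕ) ^ (k + 1) ≤ 3 ^ (Nat.digits 3 a).length :=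
        Nat.pow_le_pow_right (by norm_num) (by omega)
      have h3 : (3:ℕ) ^ (k + 1) = 3 * 3 ^ k := by ring
      have h4 : 3 * 3 ^ k ≤ 3 * a := by linarith
      have h5 : (3:ℕ) ^ k ≤ a := Nat.le_of_mul_le_mul_left h4 (by norm_num)
      exact absurd ha (not_lt.mpr h5)
  rw [show k = (Nat.digits 3 a).length + (k - (Nat.digits 3 a).length) by omega,
      ← Nat.digits_append_zeroes_append_digits (by norm_num : (1:ℕ) < 3) hc]
  simp

lemma sum_digits_one : (Nat.digits 3 1).sum = 1 := by
  rw [Nat.digits_def' (by norm_num : 1 < 3) (by norm_num : 0 < 1)]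
  norm_num

lemma sum_digits_pow_sub_one (n : ℕ) : (Nat.digits 3 (3 ^ n - 1)).sum = 2 * n := by
  induction n with
  | zero => simp
  | succ k ih =>
    rcases Nat.eq_zero_or_pos k with rfl | hk
    · norm_num
    · have hP : 1 ≤ (3:ℕ) ^ k := Nat.one_le_pow _ _ (by norm_num)
      have key : 3 ^ (k + 1) - 1 = 2 + 3 ^ 1 * (3 ^ k - 1) := by
        have h3 : (3:ℕ) ^ (k + 1) = 3 * 3 ^ k := by ring
        obtain ⟨P, hPe⟩ : ∃ P, (3:ℕ) ^ k = P := ⟨_, rfl⟩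
        rw [h3, hPe]
        rw [hPe] at hP
        norm_num
        omega
      have hpos : 0 < (3:ℕ) ^ k - 1 ∨ (3:ℕ) ^ k - 1 = 0 := by omega
      rcases hpos with hpos | hzero
      · rw [key, sum_digits_split (by norm_num) hpos, ih]
        norm_num
        ring
      · exfalso
        have : (3:ℕ) ^ k ≥ 3 ^ 1 := Nat.pow_le_pow_right (by norm_num) hk
        omega

lemma sum_digits_pow_sub_two (n : ℕ) (hn : 1 ≤ n) :
    (Nat.digits 3 (3 ^ n - 2)).sum = 2 * n - 1 := by
  obtain ⟨k, rfl⟩ : ∃ k, n = k + 1 := ⟨n - 1, by omega⟩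
  rcases Nat.eq_zero_or_pos k with rfl | hk
  · norm_num
  · have hP : (3:ℕ) ^ 1 ≤ (3:ℕ) ^ k := Nat.pow_le_pow_right (by norm_num) hk
    have key : 3 ^ (k + 1) - 2 = 1 + 3 ^ 1 * (3 ^ k - 1) := by
      have h3 : (3:ℕ) ^ (k + 1) = 3 * 3 ^ k := by ring
      obtain ⟨P, hPe⟩ : ∃ P, (3:ℕ) ^ k = P := ⟨_, rfl⟩
      rw [h3, hPe]
      rw [hPe] at hP
      norm_num at hP ⊢
      omega
    rw [key, sum_digits_split (by norm_num) (by omega), sum_digits_one,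
        sum_digits_pow_sub_one]
    omega

theorem digit_sum_v_mult_mod_three (m : ℕ) (hm : 5 ≤ m) (hm4 : m % 4 = 1) :
    Nat.gcd ((3 ^ m - 1) / 2 - 3 ^ ((m - 1) / 2) - 1) (3 ^ m - 1) = 1 ∧
    ∀ i : ℕ, i ≤ (3 ^ ((m - 1) / 2) - 1) / 4 →
      (Nat.digits 3 ((((3 ^ m - 1) / 2 - 3 ^ ((m - 1) / 2) - 1) * (1 + 2 * i))
        % (3 ^ m - 1))).sum % 4 = 3 := by
  obtain ⟨h, hh, hmm⟩ : ∃ h, (m - 1) / 2 = h ∧ m = 2 * h + 1 := ⟨(m - 1) / 2, rfl, by omega⟩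
  have hheven : h % 2 = 0 := by omega
  have hh2 : 2 ≤ h := by omega
  rw [hh, hmm]
  have hpow : (3:ℕ) ^ (2 * h + 1) = 3 * (3 ^ h * 3 ^ h) := by ring
  rw [hpow]
  have hH9 : 9 ≤ (3:ℕ) ^ h := by
    calc (9:ℕ) = 3 ^ 2 := by norm_num
      _ ≤ 3 ^ h := Nat.pow_le_pow_right (by norm_num) hh2
  have hH4 : (3:ℕ) ^ h % 4 = 1 := by
    obtain ⟨k, hk⟩ : ∃ k, h = 2 * k := ⟨h / 2, by omega⟩
    rw [hk, pow_mul]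
    rw [Nat.pow_mod]
    norm_num
  obtain ⟨H, hH⟩ : ∃ H, (3:ℕ) ^ h = H := ⟨_, rfl⟩
  rw [hH]
  rw [hH] at hH9 hH4
  obtain ⟨Q, hQ⟩ : ∃ Q, H * H = Q := ⟨_, rfl⟩
  rw [hQ]
  have hQ4 : Q % 4 = 1 := by
    rw [← hQ, Nat.mul_mod, hH4]
  have hQH : 3 * H ≤ Q := by
    rw [← hQ]
    exact Nat.mul_le_mul_right H (by omega)
  obtain ⟨R, hR⟩ : ∃ R, (3 * Q - 1) / 2 = R := ⟨_, rfl⟩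
  rw [hR]
  have h2R : 2 * R + 1 = 3 * Q := by omega
  obtain ⟨A, hA0⟩ : ∃ A, R - H - 1 = A := ⟨_, rfl⟩
  rw [hA0]
  have hA : A + H + 1 = R := by omega
  have hN : 3 * Q - 1 = 2 * R := by omega
  constructor
  · -- gcd part
    set g := Nat.gcd A (3 * Q - 1) with hg
    have hgA : g ∣ A := Nat.gcd_dvd_left _ _
    have hgN : g ∣ 3 * Q - 1 := Nat.gcd_dvd_right _ _
    have hg2R : g ∣ 2 * R := hN ▸ hgN
    have hAodd : A % 2 = 1 := by omega
    have hgodd : ¬ 2 ∣ g := by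
      intro h2g
      have : 2 ∣ A := h2g.trans hgA
      omega
    have hgR : g ∣ R := by
      have hcop : Nat.Coprime g 2 := by
        have h1 : g % 2 = 1 := by omega
        have : Nat.gcd g 2 = Nat.gcd 2 g := Nat.gcd_comm _ _
        rw [Nat.Coprime, this, Nat.gcd_rec, h1]
        rfl
      exact hcop.dvd_of_dvd_mul_left hg2R
    have hgH1 : g ∣ H + 1 := by
      have := Nat.dvd_sub hgR hgA
      rwa [show R - A = H + 1 by omega] at this
    have key : 3 * ((H + 1) * (H - 1)) + 2 = 2 * R := by
      have h1H : 1 ≤ H := by omega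
      zify [h1H]
      have hQ' : (H:ℤ) * H = Q := by exact_mod_cast hQ
      have h2R' : 2 * (R:ℤ) + 1 = 3 * Q := by exact_mod_cast h2R
      linear_combination 3 * hQ' - h2R'
    have hg2 : g ∣ 2 := by
      have hd : g ∣ 3 * ((H + 1) * (H - 1)) :=
        Dvd.dvd.mul_left (hgH1.mul_right (H - 1)) 3
      have hd2 : g ∣ 3 * ((H + 1) * (H - 1)) + 2 := by
        rw [key]; exact hg2R
      exact (Nat.dvd_add_right hd).mp hd2
    have hgle : g ≤ 2 := Nat.le_of_dvd (by norm_num) hg2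
    have hgpos : 0 < g := Nat.gcd_pos_of_pos_right _ (by omega)
    omega
  · -- digit sum part
    intro i hi
    have h2s : 2 + 4 * i ≤ H + 1 := by omega
    obtain ⟨W, hW⟩ : ∃ W, (1 + 2 * i) * (H + 1) = W := ⟨_, rfl⟩
    have hWb : 2 * W + 2 * H ≤ 2 * R := by
      nlinarith [mul_le_mul_left h2s (H + 1), hW, h2R, hQ, hH9,
        mul_le_mul_left hH9 H]
    obtain ⟨x, hx0⟩ : ∃ x, R - W = x := ⟨_, rfl⟩
    have hxW : x + W = R := by omega
    have hW1 : 1 ≤ W := by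
      have : 0 < (1 + 2 * i) * (H + 1) := by positivity
      omega
    have E1 : A * (1 + 2 * i) = 2 * R * i + x := by
      have h1 : (A:ℤ) + H + 1 = R := by exact_mod_cast hA
      have h2 : ((1:ℤ) + 2 * i) * (H + 1) = W := by exact_mod_cast hW
      have h3 : (x:ℤ) + W = R := by exact_mod_cast hxW
      zify
      linear_combination (1 + 2 * (i:ℤ)) * h1 - h2 - h3
    have hmod : A * (1 + 2 * i) % (3 * Q - 1) = x := by
      rw [hN, E1, Nat.mul_add_mod, Nat.mod_eq_of_lt (by omega)]
    rw [hmod]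
    -- now compute digit sum of x
    have hZ1 : (x:ℤ) + W = R := by exact_mod_cast hxW
    have hZ2 : ((1:ℤ) + 2 * i) * (H + 1) = W := by exact_mod_cast hW
    have hZ3 : 2 * (R:ℤ) + 1 = 3 * Q := by exact_mod_cast h2R
    have hZ4 : (H:ℤ) * H = Q := by exact_mod_cast hQ
    rcases (by omega : 2 + 4 * i + 1 ≤ H ∨ 2 + 4 * i = H + 1) with hcase | hcase
    · -- main case
      obtain ⟨a, haD⟩ : ∃ a, 2 * a + 3 + 4 * i = H := ⟨(H - 3 - 4 * i) / 2, by omega⟩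
      have haodd : a % 2 = 1 := by omega
      obtain ⟨G, hG⟩ : ∃ G, a + H * (H + a) = G := ⟨_, rfl⟩
      have hGx : G = x := by
        have hZ5 : 2 * (a:ℤ) + 3 + 4 * i = H := by exact_mod_cast haD
        have hZ6 : (a:ℤ) + H * (H + a) = G := by exact_mod_cast hG
        have h2 : 2 * (G:ℤ) = 2 * x := by
          linear_combination (-2) * hZ6 - 2 * hZ1 - 2 * hZ2 - hZ3 + ((H:ℤ) + 1) * hZ5 + 3 * hZ4
        have : 2 * G = 2 * x := by exact_mod_cast h2
        omega
      rw [← hGx, ← hG, ← hH]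
      have haH : a < 3 ^ h := by rw [hH]; omega
      rw [sum_digits_split haH (by positivity),
          show (3:ℕ) ^ h + a = a + 3 ^ h * 1 by ring,
          sum_digits_split haH (by norm_num), sum_digits_one]
      have hp := Nat.modEq_digits_sum 2 3 (by norm_num) a
      unfold Nat.ModEq at hp
      omega
    · -- edge case
      obtain ⟨G, hG⟩ : ∃ G, (H - 1) + H * (H - 2) = G := ⟨_, rfl⟩
      have hGx : G = x := by
        have hZ5 : 2 + 4 * (i:ℤ) = H + 1 := by exact_mod_cast hcase
        have hZ6 : ((H:ℤ) - 1) + H * (H - 2) = G := by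
          have h2H : 2 ≤ H := by omega
          zify [show 1 ≤ H by omega, h2H] at hG
          exact_mod_cast hG
        have h2 : 2 * (G:ℤ) = 2 * x := by
          linear_combination (-2) * hZ6 - 2 * hZ1 - 2 * hZ2 - hZ3 + ((H:ℤ) + 1) * hZ5 + 3 * hZ4
        have : 2 * G = 2 * x := by exact_mod_cast h2
        omega
      rw [← hGx, ← hG, ← hH]
      have ha1 : (3:ℕ) ^ h - 1 < 3 ^ h := by rw [hH]; omega
      have hc2 : 0 < (3:ℕ) ^ h - 2 := by rw [hH]; omega
      rw [sum_digits_split ha1 hc2, sum_digits_pow_sub_one,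
          sum_digits_pow_sub_two h (by omega)]
      omega
end
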